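/- Let Ω ⊆ ℝⁿ with n ≥ 2 be an open set and let u ∈ C³(Ω). Let a: [0,∞) → (0,∞) be a C¹ function, set ϑ_a(t) := t·a'(t)/a(t), and suppose −1 < i_a := inf_{t≥0} ϑ_a(t) ≤ sup_{t≥0} ϑ_a(t) < ∞. Assume moreover that the map v ↦ a(|v|) is continuously differentiable on ℝⁿ. Then there exists a constant c = c(n,i_a) > 0 such that the pointwise inequality c·a(|Du|)²·|D²u|² ≤ div(a(|Du|)²·(D²u·Du − Δu·Du)) + (div(a(|Du|)·Du))² holds everywhere in Ω. -/

import Mathlib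

/-!
Write `g = Du`, `M = D²u` and `A = a(|Du|)`. Expanding both divergences, the third derivatives of
`u` cancel by the symmetry of `D³u`, and so do all terms containing `Δu`; what remains is the
identity `RHS = A²|M|² + 2A ⟨∇A, Mg⟩ + ⟨∇A, g⟩²`. By the chain rule `∇A = s Mg` with
`s = a'(|g|)/|g|` (when `g ≠ 0`; for `g = 0` the right-hand side is just `A²|M|²`), so with
`θ = |g|² s / A = ϑ_a(|g|) ≥ i_a > -1` the claim is the algebraic inequality
`|g|⁴|M|² + 2θ|g|²|Mg|² + θ²⟨g, Mg⟩² ≥ min(1, (1 + i_a)²) |g|⁴|M|²`. For `θ < 0` it follows from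
`⟨g, Mg⟩² ≤ |g|⁴|M|²` and `2|g|²|Mg|² ≤ |g|⁴|M|² + ⟨g, Mg⟩²`; the latter is row-wise
Cauchy–Schwarz for the matrix `|g|² M - g ⊗ Mg` applied to `g`, which is where the symmetry of `M`
enters.
-/

open Matrix

/-- The Jacobian matrix `DX` of a vector field `X : ℝⁿ → ℝⁿ`. -/
noncomputable def jac {n : ℕ} (X : (Fin n → ℝ) → (Fin n → ℝ)) (x : Fin n → ℝ) :
    Matrix (Fin n) (Fin n) ℝ :=
  Matrix.of fun i j => fderiv ℝ X x (Pi.single j 1) i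

/-- The divergence `div X = tr(DX)` of a vector field. -/
noncomputable def divg {n : ℕ} (X : (Fin n → ℝ) → (Fin n → ℝ)) (x : Fin n → ℝ) : ℝ :=
  Matrix.trace (jac X x)

/-- The gradient `Du` of a scalar function. -/
noncomputable def grad {n : ℕ} (u : (Fin n → ℝ) → ℝ) (x : Fin n → ℝ) : Fin n → ℝ :=
  fun i => fderiv ℝ u x (Pi.single i 1)

/-- The Hessian matrix `D²u` of a scalar function. -/
noncomputable def hess {n : ℕ} (u : (Fin n → ℝ) → ℝ) (x : Fin n → ℝ) :
    Matrix (Fin n) (Fin n) ℝ :=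
  Matrix.of fun i j => fderiv ℝ (fun y => fderiv ℝ u y (Pi.single i 1)) x (Pi.single j 1)

/-- The Laplacian `Δu = tr(D²u)`. -/
noncomputable def lap {n : ℕ} (u : (Fin n → ℝ) → ℝ) (x : Fin n → ℝ) : ℝ :=
  Matrix.trace (hess u x)

/-- The Euclidean norm of a vector in `ℝⁿ`. -/
noncomputable def nrm {n : ℕ} (v : Fin n → ℝ) : ℝ := Real.sqrt (∑ i, v i ^ 2)

/-- The quantity `ϑ_a(t) = t·a'(t)/a(t)`. -/
noncomputable def vth (a : ℝ → ℝ) (t : ℝ) : ℝ := t * deriv a t / a t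

section Algebra

variable {m ι : Type*} [Fintype m] [Fintype ι]

lemma dotProduct_self_pos {v : ι → ℝ} (hv : v ≠ 0) : 0 < v ⬝ᵥ v :=
  (Finset.sum_nonneg fun i _ => mul_self_nonneg (v i)).lt_of_ne
    (Ne.symm (dotProduct_self_eq_zero.not.2 hv))

lemma sq_dotProduct_le (v w : ι → ℝ) : (v ⬝ᵥ w) ^ 2 ≤ (v ⬝ᵥ v) * (w ⬝ᵥ w) := by
  simpa only [dotProduct, sq] using Finset.sum_mul_sq_le_sq_mul_sq Finset.univ v w

lemma mulVec_dotProduct_mulVec_le (M : Matrix m ι ℝ) (v : ι → ℝ) :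
    (M *ᵥ v) ⬝ᵥ (M *ᵥ v) ≤ (∑ i, ∑ j, M i j ^ 2) * (v ⬝ᵥ v) := by
  rw [Finset.sum_mul]
  refine Finset.sum_le_sum fun i _ => ?_
  simpa only [← sq, mulVec, dotProduct] using sq_dotProduct_le (fun j => M i j) v

lemma sum_sq_smul_sub_vecMulVec (c : ℝ) (M : Matrix m ι ℝ) (v : m → ℝ) (w : ι → ℝ) :
    ∑ i, ∑ j, (c • M - vecMulVec v w) i j ^ 2 =
      c ^ 2 * (∑ i, ∑ j, M i j ^ 2) - 2 * c * (v ⬝ᵥ (M *ᵥ w)) + (v ⬝ᵥ v) * (w ⬝ᵥ w) := by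
  simp only [dotProduct, Finset.sum_mul_sum]
  simp only [Matrix.sub_apply, Matrix.smul_apply, vecMulVec_apply, smul_eq_mul, mulVec, dotProduct,
    Finset.mul_sum, ← Finset.sum_sub_distrib, ← Finset.sum_add_distrib]
  exact Finset.sum_congr rfl fun i _ => Finset.sum_congr rfl fun j _ => by ring

lemma two_mul_mulVec_dotProduct_mulVec_le {M : Matrix ι ι ℝ} (hM : M.IsSymm) (v : ι → ℝ) :
    2 * (v ⬝ᵥ v) * ((M *ᵥ v) ⬝ᵥ (M *ᵥ v)) ≤
      (v ⬝ᵥ v) ^ 2 * (∑ i, ∑ j, M i j ^ 2) + (v ⬝ᵥ (M *ᵥ v)) ^ 2 := by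
  set t := v ⬝ᵥ v
  set b := M *ᵥ v
  set Q := v ⬝ᵥ b
  have hMb : v ⬝ᵥ (M *ᵥ b) = b ⬝ᵥ b := by
    rw [dotProduct_mulVec, ← mulVec_transpose, hM.eq]
  have hYv : (t • M - vecMulVec v b) *ᵥ v = t • b - Q • v := by
    rw [sub_mulVec, smul_mulVec, vecMulVec_mulVec, op_smul_eq_smul, dotProduct_comm]
  have hY : ∑ i, ∑ j, (t • M - vecMulVec v b) i j ^ 2 =
      t ^ 2 * (∑ i, ∑ j, M i j ^ 2) - 2 * t * (b ⬝ᵥ b) + t * (b ⬝ᵥ b) := by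
    rw [sum_sq_smul_sub_vecMulVec, hMb]
  have key := mulVec_dotProduct_mulVec_le (t • M - vecMulVec v b) v
  rw [hYv, hY] at key
  simp only [sub_dotProduct, dotProduct_sub, smul_dotProduct, dotProduct_smul, smul_eq_mul,
    dotProduct_comm b v, show v ⬝ᵥ v = t from rfl, show v ⬝ᵥ b = Q from rfl] at key
  have ht : 0 ≤ t := Finset.sum_nonneg fun i _ => mul_self_nonneg (v i)
  rcases ht.eq_or_lt with ht₀ | ht₀
  · rw [← ht₀]
    simpa using sq_nonneg Q
  · refine le_of_mul_le_mul_left ?_ ht₀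
    linarith

lemma min_one_sq_mul_le {P R q ia θ : ℝ} (hq : 0 ≤ q) (hqP : q ≤ P) (hR : 0 ≤ R)
    (hRP : R ≤ P + q) (hia : -1 < ia) (hθ : ia ≤ θ) :
    min 1 ((1 + ia) ^ 2) * P ≤ P + θ * R + θ ^ 2 * q := by
  have hP : 0 ≤ P := hq.trans hqP
  rcases le_or_gt 0 θ with hθ₀ | hθ₀
  · calc min 1 ((1 + ia) ^ 2) * P ≤ 1 * P := by gcongr; exact min_le_left _ _
      _ ≤ P + θ * R + θ ^ 2 * q := by nlinarith [mul_nonneg hθ₀ hR, mul_nonneg (sq_nonneg θ) hq]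
  · calc min 1 ((1 + ia) ^ 2) * P ≤ (1 + ia) ^ 2 * P := by gcongr; exact min_le_right _ _
      _ ≤ (1 + θ) ^ 2 * P := by gcongr; linarith
      _ ≤ (1 + θ) * (P + θ * q) := by
        nlinarith [mul_nonneg (by linarith : (0 : ℝ) ≤ 1 + θ)
          (mul_nonneg_of_nonpos_of_nonpos hθ₀.le (by linarith : q - P ≤ 0))]
      _ ≤ P + θ * R + θ ^ 2 * q := by nlinarith [mul_le_mul_of_nonpos_left hRP hθ₀.le]

lemma min_one_sq_mul_le_of_isSymm {M : Matrix ι ι ℝ} (hM : M.IsSymm) {v : ι → ℝ} (hv : v ≠ 0)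
    {A s ia : ℝ} (hA : 0 < A) (hia : -1 < ia) (hθ : ia ≤ (v ⬝ᵥ v) * s / A) :
    min 1 ((1 + ia) ^ 2) * A ^ 2 * (∑ i, ∑ j, M i j ^ 2) ≤
      A ^ 2 * (∑ i, ∑ j, M i j ^ 2) + 2 * A * (s * ((M *ᵥ v) ⬝ᵥ (M *ᵥ v)))
        + (s * (v ⬝ᵥ (M *ᵥ v))) ^ 2 := by
  set t := v ⬝ᵥ v
  set S := ∑ i, ∑ j, M i j ^ 2
  set B := (M *ᵥ v) ⬝ᵥ (M *ᵥ v)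
  set Q := v ⬝ᵥ (M *ᵥ v)
  have ht : 0 < t := dotProduct_self_pos hv
  have hB : 0 ≤ B := Finset.sum_nonneg fun i _ => mul_self_nonneg _
  have hQB : Q ^ 2 ≤ t * B := sq_dotProduct_le v (M *ᵥ v)
  have hBS : B ≤ S * t := mulVec_dotProduct_mulVec_le M v
  have key := min_one_sq_mul_le (P := t ^ 2 * S) (R := 2 * t * B) (q := Q ^ 2) (sq_nonneg Q)
    (by nlinarith) (by positivity) (by linarith [two_mul_mulVec_dotProduct_mulVec_le hM v]) hia hθ
  calc min 1 ((1 + ia) ^ 2) * A ^ 2 * S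
        = (A / t) ^ 2 * (min 1 ((1 + ia) ^ 2) * (t ^ 2 * S)) := by field_simp
    _ ≤ (A / t) ^ 2 * (t ^ 2 * S + t * s / A * (2 * t * B) + (t * s / A) ^ 2 * Q ^ 2) := by
        gcongr
    _ = A ^ 2 * S + 2 * A * (s * B) + (s * Q) ^ 2 := by field_simp

end Algebra

noncomputable def partialDeriv {n : ℕ} (i : Fin n) (f : (Fin n → ℝ) → ℝ) : (Fin n → ℝ) → ℝ :=
  fun y => fderiv ℝ f y (Pi.single i 1)

section PartialDeriv

variable {n : ℕ} {f g : (Fin n → ℝ) → ℝ} {x : Fin n → ℝ}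

lemma fderiv_apply_eq_grad_dotProduct (v : Fin n → ℝ) : fderiv ℝ f x v = grad f x ⬝ᵥ v := by
  conv_lhs => rw [← Finset.univ_sum_single v]
  simp only [map_sum, dotProduct]
  refine Finset.sum_congr rfl fun k _ => ?_
  change _ = fderiv ℝ f x (Pi.single k 1) * v k
  rw [mul_comm, ← smul_eq_mul, ← map_smul, ← Pi.single_smul, smul_eq_mul, mul_one]

lemma ContDiffAt.contDiffAt_partialDeriv {k m : WithTop ℕ∞} (hf : ContDiffAt ℝ k f x)
    (hkm : m + 1 ≤ k) (i : Fin n) : ContDiffAt ℝ m (partialDeriv i f) x :=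
  (hf.fderiv_right hkm).clm_apply contDiffAt_const

lemma ContDiffAt.differentiableAt_partialDeriv {k : WithTop ℕ∞} (hf : ContDiffAt ℝ k f x)
    (hk : 2 ≤ k) (i : Fin n) : DifferentiableAt ℝ (partialDeriv i f) x :=
  (hf.contDiffAt_partialDeriv (m := 1) hk i).differentiableAt one_ne_zero

lemma partialDeriv_partialDeriv_eq_fderiv (hf : DifferentiableAt ℝ (fderiv ℝ f) x) (i j : Fin n) :
    partialDeriv i (partialDeriv j f) x =
      fderiv ℝ (fderiv ℝ f) x (Pi.single i 1) (Pi.single j 1) := by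
  change fderiv ℝ (fun y => fderiv ℝ f y (Pi.single j 1)) x (Pi.single i 1) = _
  simp [fderiv_clm_apply hf (differentiableAt_const _)]

lemma partialDeriv_comm (hf : ContDiffAt ℝ 2 f x) (i j : Fin n) :
    partialDeriv i (partialDeriv j f) x = partialDeriv j (partialDeriv i f) x := by
  have hDf : DifferentiableAt ℝ (fderiv ℝ f) x :=
    (hf.fderiv_right (m := 1) (by norm_num)).differentiableAt (by norm_num)
  rw [partialDeriv_partialDeriv_eq_fderiv hDf, partialDeriv_partialDeriv_eq_fderiv hDf]
  exact hf.isSymmSndFDerivAt (by simp) _ _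

lemma partialDeriv_mul (hf : DifferentiableAt ℝ f x) (hg : DifferentiableAt ℝ g x) (i : Fin n) :
    partialDeriv i (fun y => f y * g y) x =
      f x * partialDeriv i g x + g x * partialDeriv i f x := by
  simp [partialDeriv, fderiv_fun_mul hf hg]

lemma partialDeriv_sub (hf : DifferentiableAt ℝ f x) (hg : DifferentiableAt ℝ g x) (i : Fin n) :
    partialDeriv i (fun y => f y - g y) x = partialDeriv i f x - partialDeriv i g x := by
  simp [partialDeriv, fderiv_fun_sub hf hg]

lemma partialDeriv_sum {ι : Type*} {s : Finset ι} {F : ι → (Fin n → ℝ) → ℝ}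
    (hF : ∀ k ∈ s, DifferentiableAt ℝ (F k) x) (i : Fin n) :
    partialDeriv i (fun y => ∑ k ∈ s, F k y) x = ∑ k ∈ s, partialDeriv i (F k) x := by
  simp [partialDeriv, fderiv_fun_sum hF]

end PartialDeriv

section Divergence

variable {n : ℕ} {x : Fin n → ℝ}

lemma grad_eq_partialDeriv (f : (Fin n → ℝ) → ℝ) (y : Fin n → ℝ) (i : Fin n) :
    grad f y i = partialDeriv i f y := rfl

lemma hess_eq_partialDeriv (f : (Fin n → ℝ) → ℝ) (y : Fin n → ℝ) (i j : Fin n) :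
    hess f y i j = partialDeriv j (partialDeriv i f) y := rfl

lemma lap_eq_sum_partialDeriv (f : (Fin n → ℝ) → ℝ) :
    lap f = fun y => ∑ i, partialDeriv i (partialDeriv i f) y := rfl

lemma ContDiffAt.differentiableAt_grad {f : (Fin n → ℝ) → ℝ} {k : WithTop ℕ∞}
    (hf : ContDiffAt ℝ k f x) (hk : 2 ≤ k) : DifferentiableAt ℝ (grad f) x :=
  differentiableAt_pi.2 (hf.differentiableAt_partialDeriv hk)

lemma hess_isSymm {f : (Fin n → ℝ) → ℝ} (hf : ContDiffAt ℝ 2 f x) : (hess f x).IsSymm :=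
  Matrix.IsSymm.ext fun i j => partialDeriv_comm hf i j

lemma jac_apply {X : (Fin n → ℝ) → Fin n → ℝ} (hX : DifferentiableAt ℝ X x) (i j : Fin n) :
    jac X x i j = partialDeriv j (fun y => X y i) x := by
  rw [differentiableAt_pi] at hX
  simp [jac, fderiv_pi hX, partialDeriv]

lemma jac_grad {f : (Fin n → ℝ) → ℝ} (hf : DifferentiableAt ℝ (grad f) x) :
    jac (grad f) x = hess f x :=
  Matrix.ext fun i j => jac_apply hf i j

lemma grad_comp {F : (Fin n → ℝ) → ℝ} {G : (Fin n → ℝ) → Fin n → ℝ}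
    (hF : DifferentiableAt ℝ F (G x)) (hG : DifferentiableAt ℝ G x) :
    grad (fun y => F (G y)) x = grad F (G x) ᵥ* jac G x := by
  ext j
  rw [grad_eq_partialDeriv, partialDeriv, fderiv_fun_comp x hF hG, ContinuousLinearMap.comp_apply,
    fderiv_apply_eq_grad_dotProduct]
  rfl

lemma divg_eq_sum_partialDeriv {X : (Fin n → ℝ) → Fin n → ℝ} (hX : DifferentiableAt ℝ X x) :
    divg X x = ∑ i, partialDeriv i (fun y => X y i) x := by
  unfold divg Matrix.trace
  exact Finset.sum_congr rfl fun i _ => jac_apply hX i i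

lemma divg_smul {φ : (Fin n → ℝ) → ℝ} {X : (Fin n → ℝ) → Fin n → ℝ}
    (hφ : DifferentiableAt ℝ φ x) (hX : DifferentiableAt ℝ X x) :
    divg (fun y => φ y • X y) x = φ x * divg X x + grad φ x ⬝ᵥ X x := by
  have hXi := differentiableAt_pi.1 hX
  rw [divg_eq_sum_partialDeriv (X := fun y => φ y • X y) (hφ.smul hX),
    divg_eq_sum_partialDeriv hX]
  simp only [Pi.smul_apply, smul_eq_mul, partialDeriv_mul hφ (hXi _), Finset.sum_add_distrib,
    Finset.mul_sum, dotProduct, grad_eq_partialDeriv, mul_comm]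

lemma divg_sub {X Y : (Fin n → ℝ) → Fin n → ℝ} (hX : DifferentiableAt ℝ X x)
    (hY : DifferentiableAt ℝ Y x) : divg (fun y => X y - Y y) x = divg X x - divg Y x := by
  rw [divg_eq_sum_partialDeriv (X := fun y => X y - Y y) (hX.sub hY), divg_eq_sum_partialDeriv hX,
    divg_eq_sum_partialDeriv hY, ← Finset.sum_sub_distrib]
  exact Finset.sum_congr rfl fun i _ =>
    partialDeriv_sub (differentiableAt_pi.1 hX i) (differentiableAt_pi.1 hY i) i

lemma divg_grad {f : (Fin n → ℝ) → ℝ} (hf : DifferentiableAt ℝ (grad f) x) :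
    divg (grad f) x = lap f x := by
  rw [divg, jac_grad hf]
  rfl

lemma ContDiffAt.differentiableAt_lap {u : (Fin n → ℝ) → ℝ} (hu : ContDiffAt ℝ 3 u x) :
    DifferentiableAt ℝ (lap u) x := by
  rw [lap_eq_sum_partialDeriv]
  exact DifferentiableAt.fun_sum fun i _ =>
    (hu.contDiffAt_partialDeriv (m := 2) (by norm_num) i).differentiableAt_partialDeriv le_rfl i

end Divergence

section Identity

variable {n : ℕ} {x : Fin n → ℝ} {u : (Fin n → ℝ) → ℝ}

lemma ContDiffAt.differentiableAt_hess_mulVec_grad (hu : ContDiffAt ℝ 3 u x) :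
    DifferentiableAt ℝ (fun y => hess u y *ᵥ grad u y) x := by
  refine differentiableAt_pi.2 fun i => ?_
  change DifferentiableAt ℝ
    (fun y => ∑ k, partialDeriv k (partialDeriv i u) y * partialDeriv k u y) x
  have hdu := (hu.contDiffAt_partialDeriv (m := 2) (by norm_num) i).differentiableAt_partialDeriv
    le_rfl
  exact DifferentiableAt.fun_sum fun k _ =>
    (hdu k).fun_mul (hu.differentiableAt_partialDeriv (by norm_num) k)

lemma divg_hess_mulVec_grad (hu : ContDiffAt ℝ 3 u x) :
    divg (fun y => hess u y *ᵥ grad u y) x =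
      ∑ i, ∑ j, hess u x i j ^ 2 + grad (lap u) x ⬝ᵥ grad u x := by
  have hu₂ (i : Fin n) : ContDiffAt ℝ 2 (partialDeriv i u) x :=
    hu.contDiffAt_partialDeriv (by norm_num) i
  have hdu := hu.differentiableAt_partialDeriv (by norm_num)
  have hddu (i k : Fin n) := (hu₂ i).differentiableAt_partialDeriv le_rfl k
  have hlap (k : Fin n) :
      ∑ i, partialDeriv i (partialDeriv k (partialDeriv i u)) x = partialDeriv k (lap u) x := by
    rw [lap_eq_sum_partialDeriv, partialDeriv_sum fun i _ => hddu i i]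
    exact Finset.sum_congr rfl fun i _ => partialDeriv_comm (hu₂ i) i k
  have hterm (i : Fin n) : partialDeriv i (fun y => (hess u y *ᵥ grad u y) i) x =
      ∑ k, (hess u x i k ^ 2 +
        grad u x k * partialDeriv i (partialDeriv k (partialDeriv i u)) x) := by
    change partialDeriv i
      (fun y => ∑ k, partialDeriv k (partialDeriv i u) y * partialDeriv k u y) x = _
    rw [partialDeriv_sum fun k _ => (hddu i k).fun_mul (hdu k)]
    refine Finset.sum_congr rfl fun k _ => ?_
    rw [partialDeriv_mul (hddu i k) (hdu k), ← hess_eq_partialDeriv, ← hess_eq_partialDeriv,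
      (hess_isSymm (hu.of_le (by norm_num))).apply, ← grad_eq_partialDeriv]
    ring
  rw [divg_eq_sum_partialDeriv hu.differentiableAt_hess_mulVec_grad]
  simp only [hterm, Finset.sum_add_distrib]
  rw [Finset.sum_comm (f := fun i k => grad u x k * _), dotProduct]
  refine congrArg _ (Finset.sum_congr rfl fun k _ => ?_)
  rw [← Finset.mul_sum, hlap, mul_comm]
  rfl

lemma divg_sq_smul_add_sq_divg {A : (Fin n → ℝ) → ℝ} (hu : ContDiffAt ℝ 3 u x)
    (hA : DifferentiableAt ℝ A x) :
    divg (fun y => A y ^ 2 • (hess u y *ᵥ grad u y - lap u y • grad u y)) x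
        + divg (fun y => A y • grad u y) x ^ 2 =
      A x ^ 2 * ∑ i, ∑ j, hess u x i j ^ 2 + 2 * A x * (grad A x ⬝ᵥ (hess u x *ᵥ grad u x))
        + (grad A x ⬝ᵥ grad u x) ^ 2 := by
  have hgrad := hu.differentiableAt_grad (by norm_num)
  have hHg := hu.differentiableAt_hess_mulVec_grad
  have hLg : DifferentiableAt ℝ (fun y => lap u y • grad u y) x :=
    hu.differentiableAt_lap.smul hgrad
  have hA2 : grad (fun y => A y ^ 2) x = (2 * A x) • grad A x := by
    ext i
    simp only [grad_eq_partialDeriv, sq, partialDeriv_mul hA hA, Pi.smul_apply, smul_eq_mul]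
    ring
  rw [divg_smul (hA.fun_pow 2) (hHg.fun_sub hLg), divg_sub hHg hLg, divg_hess_mulVec_grad hu,
    divg_smul hu.differentiableAt_lap hgrad, divg_grad hgrad, divg_smul hA hgrad, divg_grad hgrad,
    hA2]
  simp only [dotProduct_sub, dotProduct_smul, smul_dotProduct, smul_eq_mul]
  ring

end Identity

section Norm

variable {n : ℕ}

lemma nrm_sq (v : Fin n → ℝ) : nrm v ^ 2 = v ⬝ᵥ v := by
  rw [nrm, Real.sq_sqrt (Finset.sum_nonneg fun i _ => sq_nonneg (v i))]
  simp only [dotProduct, sq]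

lemma nrm_pos {v : Fin n → ℝ} (hv : v ≠ 0) : 0 < nrm v :=
  Real.sqrt_pos.2 (by simpa only [dotProduct, sq] using dotProduct_self_pos hv)

lemma grad_comp_nrm {a : ℝ → ℝ} {v : Fin n → ℝ} (hv : v ≠ 0) (ha : DifferentiableAt ℝ a (nrm v)) :
    grad (fun w => a (nrm w)) v = (deriv a (nrm v) / nrm v) • v := by
  have hcoord (i : Fin n) : HasFDerivAt (fun w : Fin n → ℝ => w i)
      (ContinuousLinearMap.proj i : (Fin n → ℝ) →L[ℝ] ℝ) v :=
    hasFDerivAt_apply i v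
  have hsq := HasFDerivAt.fun_sum (u := Finset.univ) fun i _ => (hcoord i).pow 2
  have hnrm := hsq.sqrt (Real.sqrt_pos.1 (nrm_pos hv)).ne'
  have hcomp := ha.hasDerivAt.comp_hasFDerivAt v hnrm
  ext i
  rw [grad_eq_partialDeriv, partialDeriv, show (fun w => a (nrm w)) = a ∘ nrm from rfl,
    hcomp.fderiv]
  simp only [nrm, _root_.smul_apply, _root_.sum_apply, ContinuousLinearMap.proj_apply,
    Pi.single_apply, smul_eq_mul, nsmul_eq_mul, mul_ite, mul_one, mul_zero, Finset.sum_ite_eq',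
    Finset.mem_univ, if_true, Pi.smul_apply]
  ring

end Norm

theorem stmt_16_general (n : ℕ) (Ω : Set (Fin n → ℝ)) (hΩ : IsOpen Ω)
    (u : (Fin n → ℝ) → ℝ) (hu : ContDiffOn ℝ 3 u Ω)
    (a : ℝ → ℝ) (ha : ContDiffOn ℝ 1 a (Set.Ici 0)) (hapos : ∀ t ≥ (0 : ℝ), 0 < a t)
    (ia sa : ℝ) (hia : -1 < ia)
    (hbounds : ∀ t ≥ (0 : ℝ), ia ≤ vth a t ∧ vth a t ≤ sa)
    (hcomp : ContDiff ℝ 1 (fun v : Fin n → ℝ => a (nrm v))) :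
    ∃ c : ℝ, 0 < c ∧
      ∀ x ∈ Ω,
        c * (a (nrm (grad u x))) ^ 2 * (∑ i, ∑ j, hess u x i j ^ 2) ≤
          divg (fun y => (a (nrm (grad u y))) ^ 2 •
              ((hess u y).mulVec (grad u y) - lap u y • grad u y)) x
            + (divg (fun y => a (nrm (grad u y)) • grad u y) x) ^ 2 := by
  refine ⟨min 1 ((1 + ia) ^ 2), lt_min one_pos (by nlinarith), fun x hx => ?_⟩
  have hux : ContDiffAt ℝ 3 u x := (hu x hx).contDiffAt (hΩ.mem_nhds hx)
  have hsymm := hess_isSymm (hux.of_le (by norm_num))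
  have hgrad := hux.differentiableAt_grad (by norm_num)
  have hF := hcomp.differentiable one_ne_zero (grad u x)
  rw [divg_sq_smul_add_sq_divg (A := fun y => a (nrm (grad u y))) hux (hF.comp x hgrad),
    grad_comp hF hgrad, jac_grad hgrad, ← mulVec_transpose, hsymm.eq]
  by_cases hg : grad u x = 0
  · simp only [hg, mulVec_zero, dotProduct_zero, mul_zero, add_zero, zero_pow two_ne_zero]
    rw [mul_assoc]
    exact mul_le_of_le_one_left (by positivity) (min_le_left _ _)
  · have hnrm := nrm_pos hg
    have ha' : DifferentiableAt ℝ a (nrm (grad u x)) :=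
      (ha.contDiffAt (Ici_mem_nhds hnrm)).differentiableAt one_ne_zero
    rw [grad_comp_nrm hg ha', mulVec_smul, smul_dotProduct, smul_dotProduct, smul_eq_mul,
      smul_eq_mul, dotProduct_comm _ (grad u x)]
    refine min_one_sq_mul_le_of_isSymm hsymm hg (hapos _ hnrm.le) hia ?_
    rw [← nrm_sq]
    convert (hbounds (nrm (grad u x)) (Real.sqrt_nonneg _)).1 using 1
    rw [vth]
    field_simp

/-- the Cianchi–Maz'ya pointwise differential inequality
`c·a(|Du|)²·|D²u|² ≤ div(a(|Du|)²·(D²u·Du − Δu·Du)) + (div(a(|Du|)·Du))²`. -/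
theorem stmt_16 (n : ℕ) (hn : 2 ≤ n) (Ω : Set (Fin n → ℝ)) (hΩ : IsOpen Ω)
    (u : (Fin n → ℝ) → ℝ) (hu : ContDiffOn ℝ 3 u Ω)
    (a : ℝ → ℝ) (ha : ContDiffOn ℝ 1 a (Set.Ici 0)) (hapos : ∀ t ≥ (0 : ℝ), 0 < a t)
    (ia sa : ℝ) (hia : -1 < ia)
    (hbounds : ∀ t ≥ (0 : ℝ), ia ≤ vth a t ∧ vth a t ≤ sa)
    (hcomp : ContDiff ℝ 1 (fun v : Fin n → ℝ => a (nrm v))) :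
    ∃ c : ℝ, 0 < c ∧
      ∀ x ∈ Ω,
        c * (a (nrm (grad u x))) ^ 2 * (∑ i, ∑ j, hess u x i j ^ 2) ≤
          divg (fun y => (a (nrm (grad u y))) ^ 2 •
              ((hess u y).mulVec (grad u y) - lap u y • grad u y)) x
            + (divg (fun y => a (nrm (grad u y)) • grad u y) x) ^ 2 :=
  stmt_16_general n Ω hΩ u hu a ha hapos ia sa hia hbounds hcomp
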